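/- arXiv:2604.21486 — 3 statements merged into one kernel-verified Lean document; each statement's English description precedes it below -/
import Mathlib

section
/- Let k ≥ 3 and 0 < ε ≤ (k-1)/2 be integers and let G be a vgr(n, k, 5, k(k-1)²/2 − ε)-graph. Then for every vertex u of G, |E(N_2(u), V(G)∖(N(u) ∪ N_2(u)))| = 2ε. -/
open SimpleGraph

/-- The set of vertices at distance exactly 2 from `v` in `G` (denoted `N₂(v)`). -/
def distTwoSet {V : Type*} (G : SimpleGraph V) (v : V) : Set V := {w | G.dist v w = 2}

/-- The set of edges of `G` with one endpoint in `A` and the other endpoint in `B`,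
denoted `E(A, B)`. -/
def edgesBetween {V : Type*} (G : SimpleGraph V) (A B : Set V) : Set (Sym2 V) :=
  {e | e ∈ G.edgeSet ∧ ∃ a ∈ A, ∃ b ∈ B, e = s(a, b)}

/-- Twice the number of cycles of length `g` through the vertex `v`: we count the closed
walks based at `v` that are cycles of length `g`; every (undirected) cycle of length `g`
containing `v` corresponds to exactly two such walks (its two orientations). -/
noncomputable def doubleCycleCountAt {V : Type*} (G : SimpleGraph V) (g : ℕ) (v : V) : ℕ :=
  {p : G.Walk v v | p.IsCycle ∧ p.length = g}.ncard

/-- `G` is a `vgr(n, k, g, lam)`-graph: a `k`-regular graph of girth `g` on `n` vertices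
in which every vertex lies on exactly `lam` cycles of length `g` (equivalently, the number
of closed cycle-walks of length `g` based at each vertex is `2 * lam`). -/
def IsVGR {V : Type*} [Fintype V] (G : SimpleGraph V) [DecidableRel G.Adj]
    (n k g lam : ℕ) : Prop :=
  Fintype.card V = n ∧ (∀ v : V, G.degree v = k) ∧ G.girth = (g : ℕ∞) ∧
    ∀ v : V, doubleCycleCountAt G g v = 2 * lam

/-! Girth five makes the ball of radius two around `u` a tree: `N₂(u)` has `k(k-1)` vertices,
each with exactly one neighbour in `N(u)`, so the remaining `k(k-1)²` edge-ends at `N₂(u)` go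
either into `N₂(u)` or out of `N(u) ∪ N₂(u)`. An oriented 5-cycle through `u` is determined by
its middle edge, an ordered adjacent pair in `N₂(u)`; hence the `2λ = k(k-1)² - 2ε` oriented
5-cycles at `u` use up the inner edge-ends and exactly `2ε` edges go out. -/

open Finset

namespace SimpleGraph

variable {V : Type*} {G : SimpleGraph V}

lemma egirth_eq_of_girth_eq {n : ℕ} (hn : n ≠ 0) (h : G.girth = n) : G.egirth = n :=
  (ENat.toNat_eq_iff hn).mp h

lemma Walk.cons_isCycle_of_isPath {u v : V} (h : G.Adj u v) {p : G.Walk v u} (hp : p.IsPath)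
    (hl : 2 ≤ p.length) : (Walk.cons h p).IsCycle :=
  Walk.isCycle_iff_isPath_tail_and_le_length.mpr
    ⟨by simpa using hp, by rw [Walk.length_cons]; omega⟩

lemma not_adj_of_adj_of_adj (hG : 4 ≤ G.egirth) {a b c : V} (hab : G.Adj a b)
    (hbc : G.Adj b c) : ¬G.Adj a c := by
  intro hac
  have hcyc : (Walk.cons hab (.cons hbc (.cons hac.symm .nil))).IsCycle :=
    Walk.cons_isCycle_of_isPath hab
      (by simp [Walk.isPath_def, hab.ne', hbc.ne, hac.ne']) (by simp)
  have := hG.trans (egirth_le_length hcyc)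
  norm_num at this

lemma commonNeighbors_subsingleton (hG : 5 ≤ G.egirth) {u w : V} (huw : u ≠ w) :
    (G.commonNeighbors u w).Subsingleton := by
  intro a ha b hb
  rw [mem_commonNeighbors] at ha hb
  by_contra hab
  have hcyc : (Walk.cons ha.1 (.cons ha.2.symm (.cons hb.2 (.cons hb.1.symm .nil)))).IsCycle :=
    Walk.cons_isCycle_of_isPath ha.1
      (by simp [Walk.isPath_def, hab, huw.symm, ha.1.ne', ha.2.ne', hb.1.ne', hb.2.ne]) (by simp)
  have := hG.trans (egirth_le_length hcyc)
  norm_num at this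

lemma dist_eq_two_iff {u w : V} :
    G.dist u w = 2 ↔ u ≠ w ∧ ¬G.Adj u w ∧ (G.commonNeighbors u w).Nonempty := by
  rw [← edist_eq_two_iff, dist, ENat.toNat_eq_iff two_ne_zero]
  rfl

lemma Walk.getVert_mem_commonNeighbors {u v : V} (p : G.Walk u v) {i : ℕ}
    (hi : i + 2 ≤ p.length) :
    p.getVert (i + 1) ∈ G.commonNeighbors (p.getVert i) (p.getVert (i + 2)) :=
  ⟨p.adj_getVert_succ (by omega), (p.adj_getVert_succ (by omega)).symm⟩

variable {u : V}

lemma dist_eq_two_of_adj_of_adj (hG : 4 ≤ G.egirth) {a w : V} (hua : G.Adj u a)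
    (haw : G.Adj a w) (hwu : w ≠ u) : G.dist u w = 2 :=
  dist_eq_two_iff.mpr ⟨hwu.symm, not_adj_of_adj_of_adj hG hua haw, a, hua, haw.symm⟩

lemma dist_getVert_two_of_isCycle (hG : 4 ≤ G.egirth) {p : G.Walk u u} (hp : p.IsCycle) :
    G.dist u (p.getVert 2) = 2 := by
  have hl := hp.three_le_length
  have hmem := p.getVert_mem_commonNeighbors (i := 0) (by omega)
  rw [Walk.getVert_zero] at hmem
  refine dist_eq_two_of_adj_of_adj hG hmem.1 hmem.2.symm fun h => ?_
  have := (hp.getVert_endpoint_iff (i := 2) (by omega)).mp h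
  omega

lemma dist_getVert_three_of_isCycle (hG : 4 ≤ G.egirth) {p : G.Walk u u} (hp : p.IsCycle)
    (hl : p.length = 5) : G.dist u (p.getVert 3) = 2 := by
  simpa [Walk.getVert_reverse, hl] using dist_getVert_two_of_isCycle hG hp.reverse

lemma Walk.IsCycle.eq_of_getVert_two_of_getVert_three (hG : 5 ≤ G.egirth) {p q : G.Walk u u}
    (hp : p.IsCycle) (hpl : p.length = 5) (hql : q.length = 5)
    (h2 : p.getVert 2 = q.getVert 2) (h3 : p.getVert 3 = q.getVert 3) : p = q := by
  have hG4 : 4 ≤ G.egirth := le_trans (by norm_num) hG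
  have h1 : p.getVert 1 = q.getVert 1 := by
    refine commonNeighbors_subsingleton hG (dist_eq_two_iff.mp
      (dist_getVert_two_of_isCycle hG4 hp)).1 ?_ ?_
    · simpa using p.getVert_mem_commonNeighbors (i := 0) (by omega)
    · simpa [h2] using q.getVert_mem_commonNeighbors (i := 0) (by omega)
  have h4 : p.getVert 4 = q.getVert 4 := by
    refine commonNeighbors_subsingleton hG (dist_eq_two_iff.mp
      (dist_getVert_three_of_isCycle hG4 hp hpl)).1 ?_ ?_
    · simpa [commonNeighbors_symm, p.getVert_of_length_le hpl.le] using
        p.getVert_mem_commonNeighbors (i := 3) (by omega)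
    · simpa [commonNeighbors_symm, q.getVert_of_length_le hql.le, h3] using
        q.getVert_mem_commonNeighbors (i := 3) (by omega)
  refine Walk.ext_getVert_le_length (hpl.trans hql.symm) fun k hk => ?_
  rw [hpl] at hk
  interval_cases k <;> simp [*, Walk.getVert_of_length_le]

lemma exists_isCycle_getVert_eq (hG : 4 ≤ G.egirth) {x y : V} (hx : G.dist u x = 2)
    (hy : G.dist u y = 2) (hxy : G.Adj x y) :
    ∃ p : G.Walk u u, p.IsCycle ∧ p.length = 5 ∧ p.getVert 2 = x ∧ p.getVert 3 = y := by
  obtain ⟨hux, hnux, a, (hua : G.Adj u a), (hxa : G.Adj x a)⟩ := dist_eq_two_iff.mp hx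
  obtain ⟨huy, hnuy, b, (hub : G.Adj u b), (hyb : G.Adj y b)⟩ := dist_eq_two_iff.mp hy
  have hab : a ≠ b := by
    rintro rfl
    exact not_adj_of_adj_of_adj hG hxa.symm hxy hyb.symm
  have hay : a ≠ y := by rintro rfl; exact hnuy hua
  have hxb : x ≠ b := by rintro rfl; exact hnux hub
  refine ⟨.cons hua (.cons hxa.symm (.cons hxy (.cons hyb (.cons hub.symm .nil)))),
    Walk.cons_isCycle_of_isPath hua ?_ (by simp), rfl, rfl, rfl⟩
  simp [Walk.isPath_def, hab, hay, hxb, hux.symm, huy.symm, hua.ne', hub.ne', hxa.ne',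
    hxy.ne, hyb.ne]

lemma card_interedges_eq_sum [DecidableRel G.Adj] (s t : Finset V) :
    #(G.interedges s t) = ∑ a ∈ s, #{b ∈ t | G.Adj a b} := by
  rw [interedges_def, card_filter, sum_product]
  simp only [card_filter]

lemma ncard_edgesBetween_eq_card_interedges [DecidableRel G.Adj] {s t : Finset V}
    (hst : Disjoint s t) :
    (edgesBetween G s t).ncard = #(G.interedges s t) := by
  rw [← Set.ncard_coe_finset]
  symm
  refine Set.ncard_congr (fun e _ => s(e.1, e.2)) ?_ ?_ ?_
  · rintro ⟨a, b⟩ h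
    rw [Finset.mem_coe, mk_mem_interedges_iff] at h
    exact ⟨h.2.2, a, h.1, b, h.2.1, rfl⟩
  · rintro ⟨a, b⟩ ⟨a', b'⟩ h h' he
    rw [Finset.mem_coe, mk_mem_interedges_iff] at h h'
    rcases Sym2.eq_iff.mp he with ⟨rfl, rfl⟩ | ⟨rfl, rfl⟩
    · rfl
    · exact (Finset.disjoint_left.mp hst h.1 h'.2.1).elim
  · rintro e ⟨he, a, ha, b, hb, rfl⟩
    refine ⟨(a, b), ?_, rfl⟩
    rw [Finset.mem_coe, mk_mem_interedges_iff]
    exact ⟨ha, hb, he⟩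

variable [Fintype V]

noncomputable def distTwoFinset (G : SimpleGraph V) (u : V) : Finset V :=
  {w | G.dist u w = 2}

@[simp]
lemma mem_distTwoFinset {u w : V} : w ∈ G.distTwoFinset u ↔ G.dist u w = 2 := by
  simp [distTwoFinset]

@[simp]
lemma coe_distTwoFinset (u : V) : (G.distTwoFinset u : Set V) = distTwoSet G u := by
  ext; simp [distTwoSet]

variable [DecidableRel G.Adj]

lemma ncard_isCycle_length_five (hG : 5 ≤ G.egirth) (u : V) :
    {p : G.Walk u u | p.IsCycle ∧ p.length = 5}.ncard =
      #(G.interedges (G.distTwoFinset u) (G.distTwoFinset u)) := by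
  have hG4 : 4 ≤ G.egirth := le_trans (by norm_num) hG
  rw [← Set.ncard_coe_finset]
  refine Set.ncard_congr (fun p _ => (p.getVert 2, p.getVert 3)) ?_ ?_ ?_
  · rintro p ⟨hp, hl⟩
    rw [Finset.mem_coe, mk_mem_interedges_iff, mem_distTwoFinset, mem_distTwoFinset]
    exact ⟨dist_getVert_two_of_isCycle hG4 hp, dist_getVert_three_of_isCycle hG4 hp hl,
      p.adj_getVert_succ (by omega)⟩
  · rintro p q ⟨hp, hpl⟩ ⟨-, hql⟩ h
    rw [Prod.mk.injEq] at h
    exact hp.eq_of_getVert_two_of_getVert_three hG hpl hql h.1 h.2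
  · rintro ⟨x, y⟩ h
    rw [Finset.mem_coe, mk_mem_interedges_iff, mem_distTwoFinset, mem_distTwoFinset] at h
    obtain ⟨p, hp, hl, rfl, rfl⟩ := exists_isCycle_getVert_eq hG4 h.1 h.2.1 h.2.2
    exact ⟨p, ⟨hp, hl⟩, rfl⟩

lemma card_filter_adj_add_card_filter_adj_add_card_filter_adj_compl [DecidableEq V] (w : V)
    {s t : Finset V} (hst : Disjoint s t) :
    #{b ∈ s | G.Adj w b} + #{b ∈ t | G.Adj w b} + #{b ∈ (s ∪ t)ᶜ | G.Adj w b} =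
      G.degree w := by
  rw [← card_union_of_disjoint (disjoint_filter_filter hst), ← filter_union,
    ← card_union_of_disjoint (disjoint_filter_filter disjoint_compl_right), ← filter_union,
    union_compl, ← card_neighborFinset_eq_degree, neighborFinset_eq_filter]

lemma card_filter_adj_neighborFinset_eq_one (hG : 5 ≤ G.egirth) {u w : V}
    (hw : G.dist u w = 2) : #{a ∈ G.neighborFinset u | G.Adj w a} = 1 := by
  obtain ⟨huw, -, a, ha⟩ := dist_eq_two_iff.mp hw
  rw [card_eq_one]
  refine ⟨a, eq_singleton_iff_unique_mem.mpr ⟨by simpa [mem_commonNeighbors] using ha,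
    fun b hb => commonNeighbors_subsingleton hG huw ?_ ha⟩⟩
  simpa [mem_commonNeighbors] using hb

lemma card_distTwoFinset (hG : 5 ≤ G.egirth) {k : ℕ} (hk : G.IsRegularOfDegree k) (u : V) :
    #(G.distTwoFinset u) = k * (k - 1) := by
  classical
  have hG4 : 4 ≤ G.egirth := le_trans (by norm_num) hG
  calc #(G.distTwoFinset u) = #(G.interedges (G.distTwoFinset u) (G.neighborFinset u)) := by
        rw [card_interedges_eq_sum, card_eq_sum_ones]
        exact sum_congr rfl fun w hw =>
          (card_filter_adj_neighborFinset_eq_one hG (mem_distTwoFinset.mp hw)).symm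
    _ = #(G.interedges (G.neighborFinset u) (G.distTwoFinset u)) :=
        have := G.symm
        Rel.card_interedges_comm _ _
    _ = ∑ a ∈ G.neighborFinset u, (k - 1) := by
        rw [card_interedges_eq_sum]
        refine sum_congr rfl fun a ha => ?_
        rw [mem_neighborFinset] at ha
        have : {w ∈ G.distTwoFinset u | G.Adj a w} = (G.neighborFinset a).erase u := by
          ext w
          simp only [mem_filter, mem_distTwoFinset, mem_erase, mem_neighborFinset]
          exact ⟨fun h => ⟨(dist_eq_two_iff.mp h.1).1.symm, h.2⟩,
            fun h => ⟨dist_eq_two_of_adj_of_adj hG4 ha h.2 h.1, h.2⟩⟩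
        rw [this, card_erase_of_mem (by simpa using ha.symm), card_neighborFinset_eq_degree, hk]
    _ = k * (k - 1) := by rw [sum_const, card_neighborFinset_eq_degree, hk, smul_eq_mul]

lemma card_interedges_distTwoFinset_add [DecidableEq V] (hG : 5 ≤ G.egirth) {k : ℕ}
    (hk : G.IsRegularOfDegree k) (u : V) :
    #(G.interedges (G.distTwoFinset u) (G.distTwoFinset u)) +
      #(G.interedges (G.distTwoFinset u) (G.neighborFinset u ∪ G.distTwoFinset u)ᶜ) =
        k * (k - 1) ^ 2 := by
  have hdisj : Disjoint (G.neighborFinset u) (G.distTwoFinset u) :=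
    Finset.disjoint_left.mpr fun w hw hw2 =>
      (dist_eq_two_iff.mp (mem_distTwoFinset.mp hw2)).2.1 ((mem_neighborFinset ..).mp hw)
  rw [card_interedges_eq_sum, card_interedges_eq_sum, ← sum_add_distrib]
  calc _ = ∑ w ∈ G.distTwoFinset u, (k - 1) := sum_congr rfl fun w hw => by
          have := card_filter_adj_add_card_filter_adj_add_card_filter_adj_compl (G := G) w hdisj
          rw [card_filter_adj_neighborFinset_eq_one hG (mem_distTwoFinset.mp hw), hk] at this
          omega
    _ = k * (k - 1) ^ 2 := by rw [sum_const, card_distTwoFinset hG hk, smul_eq_mul]; ring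

end SimpleGraph

theorem vgr_outer_edges_general {V : Type*} [Fintype V] (G : SimpleGraph V) [DecidableRel G.Adj]
    (k ε n : ℕ) (hεk : 2 * ε ≤ k - 1)
    (hG : IsVGR G n k 5 (k * (k - 1) ^ 2 / 2 - ε)) :
    ∀ u : V, (edgesBetween G (distTwoSet G u)
      ((G.neighborSet u ∪ distTwoSet G u)ᶜ)).ncard = 2 * ε := by
  classical
  intro u
  obtain ⟨-, hk, hgirth, hcycles⟩ := hG
  have hG5 : 5 ≤ G.egirth := (egirth_eq_of_girth_eq (by norm_num) (by exact_mod_cast hgirth)).ge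
  have hcount := card_interedges_distTwoFinset_add hG5 hk u
  have hpent := hcycles u
  rw [doubleCycleCountAt, ncard_isCycle_length_five hG5] at hpent
  have hdisj : Disjoint (G.distTwoFinset u) (G.neighborFinset u ∪ G.distTwoFinset u)ᶜ :=
    disjoint_compl_right.mono_left subset_union_right
  rw [← coe_distTwoFinset, ← coe_neighborFinset, ← coe_union, ← coe_compl,
    ncard_edgesBetween_eq_card_interedges hdisj]
  have heven : Even (k * (k - 1) ^ 2) := by
    rw [sq, ← mul_assoc]; exact (Nat.even_mul_pred_self k).mul_right _
  -- gives `ε ≤ k(k-1)²/2`, so the truncated subtraction in `λ` is exact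
  have hle : k - 1 ≤ k * (k - 1) ^ 2 := by
    rcases k with _ | j
    · simp
    · simp only [Nat.add_sub_cancel]; nlinarith
  obtain ⟨m, hm⟩ := heven
  omega

/-- If `G` is a `vgr(n, k, 5, k(k-1)²/2 − ε)`-graph with `k ≥ 3` and
`0 < ε ≤ (k-1)/2`, then for every vertex `u`,
`|E(N₂(u), V∖(N(u) ∪ N₂(u)))| = 2ε`. -/
theorem vgr_outer_edges {V : Type*} [Fintype V] (G : SimpleGraph V) [DecidableRel G.Adj]
    (k ε n : ℕ) (hk : 3 ≤ k) (hε : 0 < ε) (hεk : 2 * ε ≤ k - 1)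
    (hG : IsVGR G n k 5 (k * (k - 1) ^ 2 / 2 - ε)) :
    ∀ u : V, (edgesBetween G (distTwoSet G u)
      ((G.neighborSet u ∪ distTwoSet G u)ᶜ)).ncard = 2 * ε :=
  vgr_outer_edges_general G k ε n hεk hG
end

section
/- Let k ≥ 3 and 0 < ε ≤ (k-1)/2 be integers and let G be a vgr(n, k, 5, k(k-1)²/2 − ε)-graph. Then for every vertex u of G and every neighbor u_1 of u, |E(N_2(u) ∩ N(u_1), V(G)∖(N(u) ∪ N_2(u)))| ≤ ε. -/
open SimpleGraph

/-!
Count the 5-cycles `u₁ a b c d u₁` through `u₁` (as closed walks) by their frames `(a, d, m)`,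
where `m = b`, or `m = c` when `a = u`. Since the girth is 5, two vertices at distance 2 have at
most one common neighbour, so a pentagon is determined by its frame; and a `k`-regular graph has
only `k (k - 1)²` candidate frames. Each outer edge `x y` (with `x ∈ N₂(u) ∩ N(u₁)`) gives the
two candidates `(x, u, y)` and `(u, x, y)`, which are frames of no pentagon because `u` and `y`
have no common neighbour. Hence `2λ + 2 |E| ≤ k (k - 1)²`, while `2λ ≥ k (k - 1)² - 2ε - 1`.
-/

open Finset

namespace SimpleGraph

variable {V : Type*} {G : SimpleGraph V}

lemma Walk.IsCycle.five_le_length (h5 : 5 ≤ G.egirth) {v : V} {p : G.Walk v v}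
    (hp : p.IsCycle) : 5 ≤ p.length := by
  exact_mod_cast h5.trans (egirth_le_length hp)

lemma five_le_egirth_of_girth_eq (h : G.girth = 5) : 5 ≤ G.egirth := by
  have hne : G.egirth ≠ ⊤ := fun htop ↦ by simp [girth, htop] at h
  rw [← ENat.natCast_toNat hne]
  exact_mod_cast h.ge

lemma eq_of_adj_of_adj_of_five_le_egirth (h5 : 5 ≤ G.egirth) {a b c d : V} (hab : a ≠ b)
    (hac : G.Adj a c) (hcb : G.Adj c b) (had : G.Adj a d) (hdb : G.Adj d b) : c = d := by
  by_contra hcd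
  have hcyc : (Walk.cons hac (.cons hcb (.cons hdb.symm (.cons had.symm .nil)))).IsCycle := by
    rw [Walk.cons_isCycle_iff]
    simp_all [Walk.isPath_def, hac.ne, hcb.ne, had.ne.symm, hdb.ne.symm, eq_comm]
  simpa using hcyc.five_le_length h5

lemma mem_distTwoSet_iff {u w : V} :
    w ∈ distTwoSet G u ↔ u ≠ w ∧ ¬ G.Adj u w ∧ (G.commonNeighbors u w).Nonempty := by
  rw [distTwoSet, Set.mem_ofPred_eq, dist, ENat.toNat_eq_iff two_ne_zero]
  exact edist_eq_two_iff

def adjPairs (G : SimpleGraph V) (A B : Set V) : Set (V × V) :=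
  {q | q.1 ∈ A ∧ q.2 ∈ B ∧ G.Adj q.1 q.2}

lemma ncard_edgesBetween_eq_ncard_adjPairs {A B : Set V} (hAB : Disjoint A B) :
    (edgesBetween G A B).ncard = (adjPairs G A B).ncard := by
  have himage : edgesBetween G A B = (fun q : V × V ↦ s(q.1, q.2)) '' adjPairs G A B := by
    ext e
    constructor
    · rintro ⟨he, a, ha, b, hb, rfl⟩
      exact ⟨(a, b), ⟨ha, hb, he⟩, rfl⟩
    · rintro ⟨⟨a, b⟩, ⟨ha, hb, hab⟩, rfl⟩
      exact ⟨hab, a, ha, b, hb, rfl⟩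
  rw [himage, Set.InjOn.ncard_image]
  rintro ⟨a, b⟩ ⟨ha, -⟩ ⟨a', b'⟩ ⟨-, hb', -⟩ h
  rcases Sym2.eq_iff.mp h with ⟨rfl, rfl⟩ | ⟨rfl, -⟩
  · rfl
  · exact (hAB.ne_of_mem ha hb' rfl).elim

def pentagonsAt (G : SimpleGraph V) (v : V) : Set (V × V × V × V) :=
  {t | G.Adj v t.1 ∧ G.Adj t.1 t.2.1 ∧ G.Adj t.2.1 t.2.2.1 ∧ G.Adj t.2.2.1 t.2.2.2 ∧
    G.Adj t.2.2.2 v ∧ [t.1, t.2.1, t.2.2.1, t.2.2.2, v].Nodup}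

lemma Walk.exists_eq_of_length_eq_five {v : V} (p : G.Walk v v) (hp : p.length = 5) :
    ∃ (a b c d : V) (h₁ : G.Adj v a) (h₂ : G.Adj a b) (h₃ : G.Adj b c) (h₄ : G.Adj c d)
      (h₅ : G.Adj d v), p = .cons h₁ (.cons h₂ (.cons h₃ (.cons h₄ (.cons h₅ .nil)))) := by
  match p, hp with
  | .cons h₁ (.cons h₂ (.cons h₃ (.cons h₄ (.cons h₅ .nil)))), _ =>
    exact ⟨_, _, _, _, h₁, h₂, h₃, h₄, h₅, rfl⟩

lemma doubleCycleCountAt_five_le_ncard_pentagonsAt [Finite V] (v : V) :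
    doubleCycleCountAt G 5 v ≤ (pentagonsAt G v).ncard := by
  refine Set.ncard_le_ncard_of_injOn
    (fun p ↦ (p.getVert 1, p.getVert 2, p.getVert 3, p.getVert 4)) ?_ ?_
  · rintro p ⟨hcyc, hlen⟩
    obtain ⟨a, b, c, d, h₁, h₂, h₃, h₄, h₅, rfl⟩ := p.exists_eq_of_length_eq_five hlen
    exact ⟨h₁, h₂, h₃, h₄, h₅, by simpa using hcyc.support_nodup⟩
  · rintro p ⟨-, hp⟩ q ⟨-, hq⟩ hpq
    obtain ⟨a, b, c, d, h₁, h₂, h₃, h₄, h₅, rfl⟩ := p.exists_eq_of_length_eq_five hp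
    obtain ⟨a', b', c', d', h₁', h₂', h₃', h₄', h₅', rfl⟩ := q.exists_eq_of_length_eq_five hq
    simp only [Walk.getVert_cons_succ, Walk.getVert_zero, Prod.mk.injEq] at hpq
    obtain ⟨rfl, rfl, rfl, rfl⟩ := hpq
    rfl

lemma mem_neighborSet_union_distTwoSet_of_adj_of_adj {u c w : V} (huw : u ≠ w)
    (huc : G.Adj u c) (hcw : G.Adj c w) : w ∈ G.neighborSet u ∪ distTwoSet G u := by
  by_cases hadj : G.Adj u w
  · exact Or.inl hadj
  · exact Or.inr <|
      mem_distTwoSet_iff.mpr ⟨huw, hadj, c, G.mem_commonNeighbors.mpr ⟨huc, hcw.symm⟩⟩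

def outerPairs (G : SimpleGraph V) (u v : V) : Set (V × V) :=
  adjPairs G (distTwoSet G u ∩ G.neighborSet v) (G.neighborSet u ∪ distTwoSet G u)ᶜ

lemma ne_of_mem_outerPairs {u v x y : V} (hq : (x, y) ∈ outerPairs G u v) :
    x ≠ u ∧ u ≠ y := by
  obtain ⟨⟨hx, -⟩, -, hxy⟩ := hq
  obtain ⟨hux, hnadj, -⟩ := mem_distTwoSet_iff.mp hx
  exact ⟨hux.symm, by rintro rfl; exact hnadj hxy.symm⟩

lemma not_adj_of_mem_outerPairs {u v x y c : V} (hq : (x, y) ∈ outerPairs G u v)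
    (huc : G.Adj u c) : ¬ G.Adj c y := fun hcy ↦
  hq.2.1 (mem_neighborSet_union_distTwoSet_of_adj_of_adj (ne_of_mem_outerPairs hq).2 huc hcy)

section Frames

variable [DecidableEq V]

def pentagonFrame (u : V) (t : V × V × V × V) : (_ : V × V) × V :=
  ⟨(t.1, t.2.2.2), if t.1 = u then t.2.2.1 else t.2.1⟩

lemma injOn_pentagonFrame (h5 : 5 ≤ G.egirth) (u v : V) :
    Set.InjOn (pentagonFrame u) (pentagonsAt G v) := by
  rintro ⟨a, b, c, d⟩ ⟨-, hab, hbc, hcd, -, hnodup⟩ ⟨a', b', c', d'⟩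
    ⟨-, hab', hbc', hcd', -, -⟩ h
  simp only [pentagonFrame, Sigma.mk.injEq, Prod.mk.injEq, heq_eq_eq] at h
  obtain ⟨⟨rfl, rfl⟩, hm⟩ := h
  simp only [List.nodup_cons, List.mem_cons, List.not_mem_nil] at hnodup
  split_ifs at hm
  · subst hm
    obtain rfl := eq_of_adj_of_adj_of_five_le_egirth h5 (by grind) hab hbc hab' hbc'
    rfl
  · subst hm
    obtain rfl := eq_of_adj_of_adj_of_five_le_egirth h5 (by grind) hbc hcd hbc' hcd'
    rfl

lemma pentagonFrame_ne_of_mem_outerPairs {u v x y : V} {t : V × V × V × V}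
    (ht : t ∈ pentagonsAt G v) (hq : (x, y) ∈ outerPairs G u v) :
    pentagonFrame u t ≠ ⟨(x, u), y⟩ ∧ pentagonFrame u t ≠ ⟨(u, x), y⟩ := by
  obtain ⟨a, b, c, d⟩ := t
  obtain ⟨-, hab, hbc, hcd, -, -⟩ := ht
  obtain ⟨hxu, -⟩ := ne_of_mem_outerPairs hq
  simp only [pentagonFrame, ne_eq, Sigma.mk.injEq, Prod.mk.injEq, heq_eq_eq]
  constructor
  · rintro ⟨⟨rfl, rfl⟩, hm⟩
    rw [if_neg hxu] at hm
    subst hm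
    exact not_adj_of_mem_outerPairs hq hcd.symm hbc.symm
  · rintro ⟨⟨rfl, rfl⟩, hm⟩
    rw [if_pos rfl] at hm
    subst hm
    exact not_adj_of_mem_outerPairs hq hab hbc

variable [Fintype V] [DecidableRel G.Adj]

def frameCandidates (G : SimpleGraph V) [DecidableRel G.Adj] (u v : V) :
    Finset ((_ : V × V) × V) :=
  (G.neighborFinset v).offDiag.sigma
    fun ad ↦ (G.neighborFinset (if ad.1 = u then ad.2 else ad.1)).erase v

lemma card_frameCandidates {k : ℕ} (hreg : ∀ w, G.degree w = k) (u v : V) :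
    (frameCandidates G u v).card = k * (k - 1) ^ 2 := by
  have hfiber : ∀ ad ∈ (G.neighborFinset v).offDiag,
      ((G.neighborFinset (if ad.1 = u then ad.2 else ad.1)).erase v).card = k - 1 := by
    intro ad had
    rw [mem_offDiag, mem_neighborFinset, mem_neighborFinset] at had
    rw [card_erase_of_mem, card_neighborFinset_eq_degree, hreg]
    rw [mem_neighborFinset]
    split_ifs
    exacts [had.2.1.symm, had.1.symm]
  rw [frameCandidates, card_sigma, sum_congr rfl hfiber, sum_const, offDiag_card,
    card_neighborFinset_eq_degree, hreg, smul_eq_mul, ← Nat.mul_sub_one, sq, mul_assoc]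

lemma pentagonFrame_mem_frameCandidates {u v : V} {t : V × V × V × V}
    (ht : t ∈ pentagonsAt G v) : pentagonFrame u t ∈ frameCandidates G u v := by
  obtain ⟨a, b, c, d⟩ := t
  obtain ⟨hva, hab, -, hcd, hdv, hnodup⟩ := ht
  simp only [List.nodup_cons, List.mem_cons, List.not_mem_nil] at hnodup
  simp only [pentagonFrame, frameCandidates, mem_sigma, mem_offDiag, mem_neighborFinset,
    mem_erase]
  split_ifs <;> grind [Adj.symm]

lemma mk_mem_frameCandidates_of_mem_outerPairs {u v x y : V} (hu : G.Adj u v)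
    (hq : (x, y) ∈ outerPairs G u v) :
    ⟨(x, u), y⟩ ∈ frameCandidates G u v ∧ ⟨(u, x), y⟩ ∈ frameCandidates G u v := by
  obtain ⟨hxu, -⟩ := ne_of_mem_outerPairs hq
  obtain ⟨⟨-, hvx⟩, hy, hxy⟩ := hq
  have hyv : y ≠ v := by
    rintro rfl
    exact hy (Or.inl hu)
  simp only [frameCandidates, mem_sigma, mem_offDiag, mem_neighborFinset, mem_erase, if_pos,
    if_neg hxu]
  exact ⟨⟨⟨hvx, hu.symm, hxu⟩, hyv, hxy⟩, ⟨hu.symm, hvx, hxu.symm⟩, hyv, hxy⟩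

lemma ncard_pentagonsAt_add_two_mul_ncard_outerPairs_le {k : ℕ} (h5 : 5 ≤ G.egirth)
    (hreg : ∀ w, G.degree w = k) {u v : V} (hu : G.Adj u v) :
    (pentagonsAt G v).ncard + 2 * (outerPairs G u v).ncard ≤ k * (k - 1) ^ 2 := by
  set F := pentagonFrame u '' pentagonsAt G v
  set B₁ := (fun q : V × V ↦ (⟨(q.1, u), q.2⟩ : (_ : V × V) × V)) '' outerPairs G u v
  set B₂ := (fun q : V × V ↦ (⟨(u, q.1), q.2⟩ : (_ : V × V) × V)) '' outerPairs G u v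
  have hF : F.ncard = (pentagonsAt G v).ncard := (injOn_pentagonFrame h5 u v).ncard_image
  have hB₁ : B₁.ncard = (outerPairs G u v).ncard := Set.InjOn.ncard_image fun q _ q' _ h ↦ by
    simp_all [Prod.ext_iff]
  have hB₂ : B₂.ncard = (outerPairs G u v).ncard := Set.InjOn.ncard_image fun q _ q' _ h ↦ by
    simp_all [Prod.ext_iff]
  have hF₁ : Disjoint F B₁ := by
    rw [Set.disjoint_left]
    rintro _ ⟨t, ht, rfl⟩ ⟨⟨x, y⟩, hq, h⟩
    exact (pentagonFrame_ne_of_mem_outerPairs ht hq).1 h.symm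
  have hFB₂ : Disjoint (F ∪ B₁) B₂ := by
    rw [Set.disjoint_left]
    rintro _ (⟨t, ht, rfl⟩ | ⟨⟨x, y⟩, hq, rfl⟩) ⟨⟨x', y'⟩, hq', h⟩
    · exact (pentagonFrame_ne_of_mem_outerPairs ht hq').2 h.symm
    · simp only [Sigma.mk.injEq, Prod.mk.injEq] at h
      exact (ne_of_mem_outerPairs hq).1 h.1.1.symm
  have hsub : F ∪ B₁ ∪ B₂ ⊆ frameCandidates G u v := by
    rintro _ ((⟨t, ht, rfl⟩ | ⟨⟨x, y⟩, hq, rfl⟩) | ⟨⟨x, y⟩, hq, rfl⟩)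
    · exact pentagonFrame_mem_frameCandidates ht
    · exact (mk_mem_frameCandidates_of_mem_outerPairs hu hq).1
    · exact (mk_mem_frameCandidates_of_mem_outerPairs hu hq).2
  calc (pentagonsAt G v).ncard + 2 * (outerPairs G u v).ncard = (F ∪ B₁ ∪ B₂).ncard := by
        rw [Set.ncard_union_eq hFB₂, Set.ncard_union_eq hF₁, hF, hB₁, hB₂]
        ring
    _ ≤ (frameCandidates G u v : Set ((_ : V × V) × V)).ncard := Set.ncard_le_ncard hsub
    _ = k * (k - 1) ^ 2 := by rw [Set.ncard_coe_finset, card_frameCandidates hreg]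

end Frames

end SimpleGraph

open SimpleGraph in
theorem vgr_outer_edges_through_neighbor_general {V : Type*} [Fintype V] (G : SimpleGraph V)
    [DecidableRel G.Adj] (k ε n : ℕ)
    (hG : IsVGR G n k 5 (k * (k - 1) ^ 2 / 2 - ε)) :
    ∀ u u₁ : V, G.Adj u u₁ →
      (edgesBetween G (distTwoSet G u ∩ G.neighborSet u₁)
        ((G.neighborSet u ∪ distTwoSet G u)ᶜ)).ncard ≤ ε := by
  classical
  obtain ⟨-, hreg, hgirth, hcycles⟩ := hG
  intro u u₁ hu
  have hdisj :
      Disjoint (distTwoSet G u ∩ G.neighborSet u₁) (G.neighborSet u ∪ distTwoSet G u)ᶜ :=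
    Set.disjoint_compl_right_iff_subset.mpr (Set.inter_subset_left.trans Set.subset_union_right)
  rw [ncard_edgesBetween_eq_ncard_adjPairs hdisj]
  have hpentagons := doubleCycleCountAt_five_le_ncard_pentagonsAt (G := G) u₁
  have hcount := ncard_pentagonsAt_add_two_mul_ncard_outerPairs_le
    (five_le_egirth_of_girth_eq (by exact_mod_cast hgirth)) hreg hu
  rw [hcycles] at hpentagons
  rw [outerPairs] at hcount
  omega

/-- If `G` is a `vgr(n, k, 5, k(k-1)²/2 − ε)`-graph with `k ≥ 3` and
`0 < ε ≤ (k-1)/2`, then for every vertex `u` and every neighbor `u₁` of `u`,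
`|E(N₂(u) ∩ N(u₁), V∖(N(u) ∪ N₂(u)))| ≤ ε`. -/
theorem vgr_outer_edges_through_neighbor {V : Type*} [Fintype V] (G : SimpleGraph V)
    [DecidableRel G.Adj] (k ε n : ℕ) (hk : 3 ≤ k) (hε : 0 < ε) (hεk : 2 * ε ≤ k - 1)
    (hG : IsVGR G n k 5 (k * (k - 1) ^ 2 / 2 - ε)) :
    ∀ u u₁ : V, G.Adj u u₁ →
      (edgesBetween G (distTwoSet G u ∩ G.neighborSet u₁)
        ((G.neighborSet u ∪ distTwoSet G u)ᶜ)).ncard ≤ ε :=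
  vgr_outer_edges_through_neighbor_general G k ε n hG
end

section
/- Let k ≥ 3 and 0 < ε ≤ (k-1)/2 be integers and let G be a vgr(n, k, 5, k(k-1)²/2 − ε)-graph. Let u be a vertex of G and let v be a vertex at distance exactly 3 from u whose unique neighbor in N_2(u) is v'. Define V_{B''} = (N_2(v) ∩ N_2(u)) ∖ N(v'). Then |V_{B''}| = |E(N(v) ∖ {v'}, N_2(u))|. -/
open SimpleGraph

section Aux
variable {V : Type*} {G : SimpleGraph V}


lemma cycles_long_of_girth_five (hg : G.girth = 5) :
    ∀ (a : V) (w : G.Walk a a), w.IsCycle → 5 ≤ w.length := by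
  have hne : G.egirth ≠ ⊤ := by
    intro h
    simp [SimpleGraph.girth, h] at hg
  have : G.egirth = (5 : ℕ∞) := by
    rw [← ENat.coe_toNat hne]
    exact_mod_cast congrArg Nat.cast hg
  intro a w hw
  have := SimpleGraph.le_egirth.mp this.ge a w hw
  exact_mod_cast this

lemma no_triangle (hg : ∀ (a : V) (w : G.Walk a a), w.IsCycle → 5 ≤ w.length)
    {a b c : V} (hab : G.Adj a b) (hbc : G.Adj b c) (hca : G.Adj c a) : False := by
  have h1 := hab.ne
  have h2 := hbc.ne
  have h3 := hca.ne
  have hcyc : (Walk.cons hab (Walk.cons hbc (Walk.cons hca Walk.nil))).IsCycle := by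
    constructor
    · constructor
      · simp [Walk.isTrail_def, Sym2.eq_iff]
        aesop
      · simp
    · simp
      aesop
  have := hg a _ hcyc
  simp at this

lemma no_square (hg : ∀ (a : V) (w : G.Walk a a), w.IsCycle → 5 ≤ w.length)
    {a b c d : V} (hab : G.Adj a b) (hbc : G.Adj b c) (hcd : G.Adj c d) (hda : G.Adj d a)
    (hac : a ≠ c) (hbd : b ≠ d) : False := by
  have h1 := hab.ne
  have h2 := hbc.ne
  have h3 := hcd.ne
  have h4 := hda.ne
  have hcyc : (Walk.cons hab (Walk.cons hbc (Walk.cons hcd (Walk.cons hda Walk.nil)))).IsCycle := by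
    constructor
    · constructor
      · simp [Walk.isTrail_def, Sym2.eq_iff]
        aesop
      · simp
    · simp
      aesop
  have := hg a _ hcyc
  simp at this

lemma dist_eq_two_of {v b x : V} (hne : v ≠ b) (hnadj : ¬ G.Adj v b)
    (h1 : G.Adj v x) (h2 : G.Adj x b) : G.dist v b = 2 := by
  have hle : G.dist v b ≤ 2 := by
    have := SimpleGraph.dist_le (Walk.cons h1 (Walk.cons h2 Walk.nil))
    simpa using this
  have h0 : G.dist v b ≠ 0 := by
    rw [SimpleGraph.dist_ne_zero_iff_ne_and_reachable]
    exact ⟨hne, ⟨Walk.cons h1 (Walk.cons h2 Walk.nil)⟩⟩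
  have h1' : G.dist v b ≠ 1 := fun h => hnadj (SimpleGraph.dist_eq_one_iff_adj.mp h)
  omega

lemma exists_common_of_dist_two {v b : V} (h : G.dist v b = 2) :
    ∃ x, G.Adj v x ∧ G.Adj x b := by
  have h0 : G.dist v b ≠ 0 := by omega
  have hr : G.Reachable v b := SimpleGraph.Reachable.of_dist_ne_zero h0
  obtain ⟨p, hp⟩ := hr.exists_walk_length_eq_dist
  rw [h] at hp
  cases p with
  | nil => simp at hp
  | cons h1 q =>
    cases q with
    | nil => simp at hp
    | cons h2 r =>
      simp only [Walk.length_cons] at hp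
      have : r.length = 0 := by omega
      have := Walk.eq_of_length_eq_zero this
      subst this
      exact ⟨_, h1, h2⟩

end Aux

/-- Let `G` be a `vgr(n, k, 5, k(k-1)²/2 − ε)`-graph with `k ≥ 3` and
`0 < ε ≤ (k-1)/2`, let `u` be a vertex, let `v` be at distance exactly `3` from `u` with
unique neighbor `v'` in `N₂(u)`, and set `V_{B''} = (N₂(v) ∩ N₂(u)) ∖ N(v')`.
Then `|V_{B''}| = |E(N(v) ∖ {v'}, N₂(u))|`. -/
theorem vgr_VBdoubleprime_card {V : Type*} [Fintype V] (G : SimpleGraph V) [DecidableRel G.Adj]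
    (k ε n : ℕ) (hk : 3 ≤ k) (hε : 0 < ε) (hεk : 2 * ε ≤ k - 1)
    (hG : IsVGR G n k 5 (k * (k - 1) ^ 2 / 2 - ε)) (u v v' : V)
    (hdist : G.dist u v = 3)
    (hv' : G.neighborSet v ∩ distTwoSet G u = {v'}) :
    ((distTwoSet G v ∩ distTwoSet G u) \ G.neighborSet v').ncard
      = (edgesBetween G (G.neighborSet v \ {v'}) (distTwoSet G u)).ncard := by
    classical
  obtain ⟨-, -, hgirth, -⟩ := hG
  have hg5 : G.girth = 5 := by exact_mod_cast hgirth
  have hg := cycles_long_of_girth_five hg5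
  have hv'mem : v' ∈ G.neighborSet v ∩ distTwoSet G u := by rw [hv']; rfl
  have hadj_vv' : G.Adj v v' := hv'mem.1
  set S := (distTwoSet G v ∩ distTwoSet G u) \ G.neighborSet v' with hS
  set f : V → Sym2 V :=
    fun w => if h : ∃ x, G.Adj v x ∧ G.Adj x w then s(h.choose, w) else s(w, w) with hf
  have hinj : Set.InjOn f S := by
    intro w hwS w' hw'S heq
    obtain ⟨⟨hw2v, hw2u⟩, hwn⟩ := hwS
    obtain ⟨⟨hw'2v, hw'2u⟩, hw'n⟩ := hw'S
    have hw2v : G.dist v w = 2 := hw2v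
    have hw'2v : G.dist v w' = 2 := hw'2v
    have hew : ∃ x, G.Adj v x ∧ G.Adj x w := exists_common_of_dist_two hw2v
    have hew' : ∃ x, G.Adj v x ∧ G.Adj x w' := exists_common_of_dist_two hw'2v
    rw [hf] at heq
    simp only [dif_pos hew, dif_pos hew'] at heq
    rw [Sym2.eq_iff] at heq
    rcases heq with ⟨-, h⟩ | ⟨h1, h2⟩
    · exact h
    · exfalso
      have hadj : G.Adj v w := by
        have := hew'.choose_spec.1
        rwa [← h2] at this
      have := SimpleGraph.dist_eq_one_iff_adj.mpr hadj
      omega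
  have himg : f '' S = edgesBetween G (G.neighborSet v \ {v'}) (distTwoSet G u) := by
    ext e
    constructor
    · rintro ⟨w, hwS, rfl⟩
      obtain ⟨⟨hw2v, hw2u⟩, hwn⟩ := hwS
      have hw2v : G.dist v w = 2 := hw2v
      have hew : ∃ x, G.Adj v x ∧ G.Adj x w := exists_common_of_dist_two hw2v
      obtain ⟨hx1, hx2⟩ := hew.choose_spec
      simp only [hf, dif_pos hew]
      refine ⟨(SimpleGraph.mem_edgeSet G).mpr hx2, hew.choose, ⟨hx1, ?_⟩, w, hw2u, rfl⟩
      intro hxv'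
      rw [Set.mem_singleton_iff] at hxv'
      apply hwn
      rw [← hxv']
      exact hx2
    · rintro ⟨hedge, a, haA, b, hb2u, rfl⟩
      obtain ⟨hav, hav'⟩ := haA
      have hav : G.Adj v a := hav
      have hav' : a ≠ v' := hav'
      have hab : G.Adj a b := (SimpleGraph.mem_edgeSet G).mp hedge
      have hb2u : G.dist u b = 2 := hb2u
      have hvb : v ≠ b := by
        intro h; rw [← h] at hb2u; rw [hdist] at hb2u; omega
      have hnadj : ¬ G.Adj v b := fun h => no_triangle hg hav hab h.symm
      have hb2v : G.dist v b = 2 := dist_eq_two_of hvb hnadj hav hab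
      have hbn : b ∉ G.neighborSet v' := by
        intro hb
        have hbv' : G.Adj b v' := (hb : G.Adj v' b).symm
        exact no_square hg hav hab hbv' hadj_vv'.symm hvb hav'
      refine ⟨b, ⟨⟨hb2v, hb2u⟩, hbn⟩, ?_⟩
      have hew : ∃ x, G.Adj v x ∧ G.Adj x b := ⟨a, hav, hab⟩
      simp only [hf, dif_pos hew]
      obtain ⟨hx1, hx2⟩ := hew.choose_spec
      have hxa : hew.choose = a := by
        by_contra hne
        exact no_square hg hx1 hx2 hab.symm hav.symm hvb hne
      rw [hxa]
  rw [← himg, Set.ncard_image_of_injOn hinj]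
end
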